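/- arXiv:2004.08101 — 9 statements merged into one kernel-verified Lean document; each statement's English description precedes it below -/
import Mathlib

section
/- Adding one more voter to an even-sized majority-voting ensemble strictly increases accuracy: for independent binary classifiers indexed by a finite set K with |K| = 2ℓ and individual accuracies p_i ∈ (0,1), and a new index a ∉ K with accuracy p_a ∈ (0,1), the majority-voting ensemble accuracy satisfies q_{2ℓ}(K) < q_{2ℓ+1}(K ∪ {a}). -/
open Finset

/-- Majority-voting ensemble accuracy of independent binary classifiers indexed by `L`
with individual accuracies `p i`. -/
noncomputable def majAcc {ι : Type*} [DecidableEq ι] (L : Finset ι) (p : ι → ℝ) : ℝ :=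
  ∑ k ∈ Finset.Icc (L.card / 2 + 1) L.card,
    ∑ I ∈ Finset.powersetCard k L, (∏ i ∈ I, p i) * ∏ j ∈ L \ I, (1 - p j)

/-- Adding one more voter to an even-sized majority-voting ensemble strictly
increases accuracy. -/
theorem add_voter_to_even_ensemble_strict {ι : Type*} [DecidableEq ι]
    (K : Finset ι) (ℓ : ℕ) (hK : K.card = 2 * ℓ) (p : ι → ℝ)
    (hp : ∀ i ∈ K, p i ∈ Set.Ioo (0 : ℝ) 1)
    (a : ι) (ha : a ∉ K) (hpa : p a ∈ Set.Ioo (0 : ℝ) 1) :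
    majAcc K p < majAcc (insert a K) p := by
  set S : ℕ → ℝ := fun k =>
    ∑ I ∈ Finset.powersetCard k K, (∏ i ∈ I, p i) * ∏ j ∈ K \ I, (1 - p j) with hS
  have hcard : (insert a K).card = 2 * ℓ + 1 := by
    rw [card_insert_of_notMem ha, hK]
  -- Per-k splitting of the sum over subsets of `insert a K`
  have hsplit : ∀ m : ℕ,
      ∑ I ∈ Finset.powersetCard (m + 1) (insert a K),
        (∏ i ∈ I, p i) * ∏ j ∈ (insert a K) \ I, (1 - p j)
        = (1 - p a) * S (m + 1) + p a * S m := by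
    intro m
    rw [powersetCard_succ_insert ha, sum_union]
    · congr 1
      · rw [mul_sum]
        refine sum_congr rfl fun J hJ => ?_
        obtain ⟨hJK, hJc⟩ := mem_powersetCard.1 hJ
        have haJ : a ∉ J := fun h => ha (hJK h)
        have h1 : (insert a K) \ J = insert a (K \ J) := by
          ext x
          simp only [mem_sdiff, mem_insert]
          constructor
          · rintro ⟨h | h, h2⟩
            · exact Or.inl h
            · exact Or.inr ⟨h, h2⟩
          · rintro (rfl | ⟨h, h2⟩)
            · exact ⟨Or.inl rfl, haJ⟩
            · exact ⟨Or.inr h, h2⟩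
        have h2 : a ∉ K \ J := by simp [ha]
        rw [h1, prod_insert h2]; ring
      · rw [sum_image, mul_sum]
        · refine sum_congr rfl fun I hI => ?_
          obtain ⟨hIK, hIc⟩ := mem_powersetCard.1 hI
          have haI : a ∉ I := fun h => ha (hIK h)
          have h1 : (insert a K) \ (insert a I) = K \ I := by
            ext x
            simp only [mem_sdiff, mem_insert, not_or]
            constructor
            · rintro ⟨h | h, h2, h3⟩ <;> [exact absurd h h2; exact ⟨h, h3⟩]
            · rintro ⟨h, h2⟩
              exact ⟨Or.inr h, fun he => ha (he ▸ h), h2⟩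
          rw [h1, prod_insert haI]; ring
        · intro I₁ hI₁ I₂ hI₂ h
          have h1 : a ∉ I₁ := fun h => ha ((mem_powersetCard.1 hI₁).1 h)
          have h2 : a ∉ I₂ := fun h => ha ((mem_powersetCard.1 hI₂).1 h)
          have := congrArg (fun s => Finset.erase s a) h
          simpa [erase_insert h1, erase_insert h2] using this
    · rw [disjoint_left]
      intro J hJ hJ'
      have : a ∉ J := fun h => ha ((mem_powersetCard.1 hJ).1 h)
      obtain ⟨I, _, rfl⟩ := mem_image.1 hJ'
      exact this (mem_insert_self a I)
  -- rewrite both sides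
  have hmajK : majAcc K p = ∑ k ∈ Finset.Icc (ℓ + 1) (2 * ℓ), S k := by
    unfold majAcc
    rw [hK]
    congr 1
    congr 1
    omega
  have htop : S (2 * ℓ + 1) = 0 := by
    rw [hS]
    have : Finset.powersetCard (2 * ℓ + 1) K = ∅ :=
      powersetCard_eq_empty.2 (by omega)
    simp [this]
  have hmajI : majAcc (insert a K) p
      = ∑ k ∈ Finset.Icc (ℓ + 1) (2 * ℓ + 1), ((1 - p a) * S k + p a * S (k - 1)) := by
    unfold majAcc
    rw [hcard]
    have hq : (2 * ℓ + 1) / 2 + 1 = ℓ + 1 := by omega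
    rw [hq]
    refine sum_congr rfl fun k hk => ?_
    have hk1 : 1 ≤ k := by simp only [mem_Icc] at hk; omega
    obtain ⟨m, rfl⟩ : ∃ m, k = m + 1 := ⟨k - 1, by omega⟩
    simpa using hsplit m
  have hshift : ∑ k ∈ Finset.Icc (ℓ + 1) (2 * ℓ + 1), S (k - 1)
      = ∑ k ∈ Finset.Icc ℓ (2 * ℓ), S k := by
    refine sum_nbij' (fun k => k - 1) (fun k => k + 1) ?_ ?_ ?_ ?_ ?_
    · simp only [mem_Icc]; intros; omega
    · simp only [mem_Icc]; intros; omega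
    · simp only [mem_Icc]; intro k hk; omega
    · simp only [mem_Icc]; intro k hk; omega
    · intro k hk; rfl
  have hsplitlow : ∑ k ∈ Finset.Icc ℓ (2 * ℓ), S k
      = S ℓ + ∑ k ∈ Finset.Icc (ℓ + 1) (2 * ℓ), S k := by
    rw [show Finset.Icc ℓ (2 * ℓ) = insert ℓ (Finset.Icc (ℓ + 1) (2 * ℓ)) by
      ext x; simp only [mem_insert, mem_Icc]; omega]
    rw [sum_insert (by simp)]
  have hsum : majAcc (insert a K) p = majAcc K p + p a * S ℓ := by
    rw [hmajI, sum_add_distrib, ← mul_sum, ← mul_sum, hshift, hsplitlow,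
      Finset.sum_Icc_succ_top (by omega), htop, hmajK]
    ring
  have hSpos : 0 < S ℓ := by
    rw [hS]
    refine sum_pos (fun I hI => ?_) ?_
    · obtain ⟨hIK, _⟩ := mem_powersetCard.1 hI
      refine mul_pos (prod_pos fun i hi => (hp i (hIK hi)).1)
        (prod_pos fun j hj => ?_)
      have := (hp j (mem_sdiff.1 hj).1).2
      linarith
    · exact powersetCard_nonempty.2 (by omega)
  rw [hsum]
  have := mul_pos hpa.1 hSpos
  linarith
end

section
/- Removing one voter from an odd-sized-plus-one (even) majority-voting ensemble strictly increases accuracy: if N = {1,…,2ℓ} with accuracies p_i ∈ (0,1) and p_{2ℓ} < 1, then q_{2ℓ}(N) < q_{2ℓ−1}(N ∖ {2ℓ}). -/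
open Finset

noncomputable def fsum (p : ℕ → ℝ) (L : Finset ℕ) (k : ℕ) : ℝ :=
  ∑ I ∈ Finset.powersetCard k L, (∏ i ∈ I, p i) * ∏ j ∈ L \ I, (1 - p j)

lemma fsum_insert (p : ℕ → ℝ) (a : ℕ) (L : Finset ℕ) (ha : a ∉ L) (k : ℕ) :
    fsum p (insert a L) (k + 1) = p a * fsum p L k + (1 - p a) * fsum p L (k + 1) := by
  have hdisj : Disjoint (Finset.powersetCard (k + 1) L)
      ((Finset.powersetCard k L).image (insert a)) := by
    rw [Finset.disjoint_right]
    intro I hI hI'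
    simp only [Finset.mem_image, Finset.mem_powersetCard] at hI hI'
    obtain ⟨J, _, rfl⟩ := hI
    exact ha (hI'.1 (Finset.mem_insert_self a J))
  have hinj : ∀ J ∈ Finset.powersetCard k L, ∀ K ∈ Finset.powersetCard k L,
      insert a J = insert a K → J = K := by
    intro J hJ K hK h
    simp only [Finset.mem_powersetCard] at hJ hK
    have haJ : a ∉ J := fun h' => ha (hJ.1 h')
    have haK : a ∉ K := fun h' => ha (hK.1 h')
    rw [← Finset.erase_insert haJ, ← Finset.erase_insert haK, h]
  have h1 : ∀ I ∈ Finset.powersetCard (k + 1) L,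
      (∏ i ∈ I, p i) * ∏ j ∈ insert a L \ I, (1 - p j)
      = (1 - p a) * ((∏ i ∈ I, p i) * ∏ j ∈ L \ I, (1 - p j)) := by
    intro I hI
    simp only [Finset.mem_powersetCard] at hI
    have haI : a ∉ I := fun h' => ha (hI.1 h')
    have hset : insert a L \ I = insert a (L \ I) := by
      ext x
      simp only [Finset.mem_sdiff, Finset.mem_insert]
      constructor
      · rintro ⟨rfl | hx, hx2⟩
        exacts [Or.inl rfl, Or.inr ⟨hx, hx2⟩]
      · rintro (rfl | ⟨hx1, hx2⟩)
        exacts [⟨Or.inl rfl, haI⟩, ⟨Or.inr hx1, hx2⟩]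
    rw [hset, Finset.prod_insert (fun h' => ha (Finset.mem_sdiff.mp h').1)]
    ring
  have h2 : ∀ J ∈ Finset.powersetCard k L,
      (∏ i ∈ insert a J, p i) * ∏ j ∈ insert a L \ insert a J, (1 - p j)
      = p a * ((∏ i ∈ J, p i) * ∏ j ∈ L \ J, (1 - p j)) := by
    intro J hJ
    simp only [Finset.mem_powersetCard] at hJ
    have haJ : a ∉ J := fun h' => ha (hJ.1 h')
    have hset : insert a L \ insert a J = L \ J := by
      ext x
      simp only [Finset.mem_sdiff, Finset.mem_insert]
      constructor
      · rintro ⟨rfl | hx1, hx2⟩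
        · exact absurd (Or.inl rfl) hx2
        · exact ⟨hx1, fun h => hx2 (Or.inr h)⟩
      · rintro ⟨hx1, hx2⟩
        refine ⟨Or.inr hx1, ?_⟩
        rintro (rfl | h)
        exacts [ha hx1, hx2 h]
    rw [hset, Finset.prod_insert haJ]
    ring
  unfold fsum
  rw [Finset.powersetCard_succ_insert ha, Finset.sum_union hdisj, Finset.sum_image hinj,
    Finset.sum_congr rfl h1, Finset.sum_congr rfl h2, ← Finset.mul_sum, ← Finset.mul_sum,
    add_comm]

lemma fsum_pos (p : ℕ → ℝ) (L : Finset ℕ) (k : ℕ) (hk : k ≤ L.card)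
    (hp : ∀ i ∈ L, p i ∈ Set.Ioo (0 : ℝ) 1) : 0 < fsum p L k := by
  apply Finset.sum_pos
  · intro I hI
    simp only [Finset.mem_powersetCard] at hI
    apply mul_pos
    · exact Finset.prod_pos fun i hi => (hp i (hI.1 hi)).1
    · exact Finset.prod_pos fun j hj => by
        have := hp j (Finset.mem_sdiff.mp hj).1; linarith [this.2]
  · exact Finset.powersetCard_nonempty.mpr hk

lemma fsum_eq_zero (p : ℕ → ℝ) (L : Finset ℕ) (k : ℕ) (hk : L.card < k) :
    fsum p L k = 0 := by
  unfold fsum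
  rw [Finset.powersetCard_eq_empty.mpr hk, Finset.sum_empty]

/-- Removing one voter from an even-sized (2ℓ-member) majority-voting ensemble strictly
increases accuracy: with `N = {1,…,2ℓ}` (here `Finset.Icc 1 (2ℓ)`), accuracies
`p i ∈ (0,1)` and `p (2ℓ) < 1`, we have `q_{2ℓ}(N) < q_{2ℓ−1}(N ∖ {2ℓ})`. -/
theorem remove_voter_from_even_ensemble_strict (ℓ : ℕ) (hℓ : 1 ≤ ℓ) (p : ℕ → ℝ)
    (hp : ∀ i ∈ Finset.Icc 1 (2 * ℓ), p i ∈ Set.Ioo (0 : ℝ) 1)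
    (hlast : p (2 * ℓ) < 1) :
    majAcc (Finset.Icc 1 (2 * ℓ)) p < majAcc ((Finset.Icc 1 (2 * ℓ)).erase (2 * ℓ)) p := by
  set M : Finset ℕ := Finset.Icc 1 (2 * ℓ - 1) with hM
  have haM : 2 * ℓ ∉ M := by simp [hM, Finset.mem_Icc]; omega
  have hNM : Finset.Icc 1 (2 * ℓ) = insert (2 * ℓ) M := by
    ext x; simp [hM, Finset.mem_Icc, Finset.mem_insert]; omega
  have herase : (Finset.Icc 1 (2 * ℓ)).erase (2 * ℓ) = M := by
    rw [hNM, Finset.erase_insert haM]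
  have hcardM : M.card = 2 * ℓ - 1 := by
    rw [hM, Nat.card_Icc]; omega
  have hcardN : (Finset.Icc 1 (2 * ℓ)).card = 2 * ℓ := by
    rw [Nat.card_Icc]; omega
  rw [herase]
  have hmajN : majAcc (Finset.Icc 1 (2 * ℓ)) p
      = ∑ k ∈ Finset.Icc (ℓ + 1) (2 * ℓ), fsum p (Finset.Icc 1 (2 * ℓ)) k := by
    unfold majAcc fsum
    rw [hcardN]
    congr 2
    omega
  have hmajM : majAcc M p = ∑ k ∈ Finset.Icc ℓ (2 * ℓ - 1), fsum p M k := by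
    unfold majAcc fsum
    rw [hcardM]
    congr 2
    omega
  set S : ℝ := ∑ k ∈ Finset.Icc ℓ (2 * ℓ - 1), fsum p M k with hS
  have hre : Finset.Icc (ℓ + 1) (2 * ℓ) = (Finset.Icc ℓ (2 * ℓ - 1)).image (· + 1) := by
    ext x; simp only [Finset.mem_Icc, Finset.mem_image]; constructor
    · intro h; exact ⟨x - 1, by omega, by omega⟩
    · rintro ⟨y, hy, rfl⟩; omega
  have hshift : ∑ j ∈ Finset.Icc ℓ (2 * ℓ - 1), fsum p M (j + 1) = S - fsum p M ℓ := by
    have h1 : Finset.Icc ℓ (2 * ℓ - 1) = insert ℓ (Finset.Icc (ℓ + 1) (2 * ℓ - 1)) := by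
      ext x; simp only [Finset.mem_Icc, Finset.mem_insert]; omega
    have h2 : (Finset.Icc ℓ (2 * ℓ - 1)).image (· + 1)
        = insert (2 * ℓ) (Finset.Icc (ℓ + 1) (2 * ℓ - 1)) := by
      rw [← hre]; ext x; simp only [Finset.mem_Icc, Finset.mem_insert]; omega
    calc ∑ j ∈ Finset.Icc ℓ (2 * ℓ - 1), fsum p M (j + 1)
        = ∑ k ∈ (Finset.Icc ℓ (2 * ℓ - 1)).image (· + 1), fsum p M k := by
          rw [Finset.sum_image (fun a _ b _ h => by omega)]
      _ = fsum p M (2 * ℓ) + ∑ k ∈ Finset.Icc (ℓ + 1) (2 * ℓ - 1), fsum p M k := by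
          rw [h2, Finset.sum_insert (by simp only [Finset.mem_Icc]; omega)]
      _ = ∑ k ∈ Finset.Icc (ℓ + 1) (2 * ℓ - 1), fsum p M k := by
          rw [fsum_eq_zero p M _ (by omega)]; ring
      _ = S - fsum p M ℓ := by
          rw [hS, h1, Finset.sum_insert (by simp only [Finset.mem_Icc]; omega)]; ring
  have hsplit : ∑ k ∈ Finset.Icc (ℓ + 1) (2 * ℓ), fsum p (Finset.Icc 1 (2 * ℓ)) k
      = p (2 * ℓ) * S + (1 - p (2 * ℓ)) * (S - fsum p M ℓ) := by
    rw [hre, Finset.sum_image (fun a _ b _ h => by omega)]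
    have hterm : ∀ j ∈ Finset.Icc ℓ (2 * ℓ - 1), fsum p (Finset.Icc 1 (2 * ℓ)) (j + 1)
        = p (2 * ℓ) * fsum p M j + (1 - p (2 * ℓ)) * fsum p M (j + 1) := by
      intro j _
      rw [hNM, fsum_insert p _ _ haM]
    rw [Finset.sum_congr rfl hterm, Finset.sum_add_distrib, ← Finset.mul_sum, ← Finset.mul_sum,
      hshift]
  have hpos : 0 < fsum p M ℓ := by
    apply fsum_pos
    · omega
    · intro i hi
      apply hp
      rw [hNM]; exact Finset.mem_insert_of_mem hi
  have h1p : 0 < 1 - p (2 * ℓ) := by linarith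
  rw [hmajN, hmajM, hsplit]
  nlinarith [mul_pos h1p hpos]
end

section
/- The maximizer of majority-voting ensemble accuracy over all subsets of a finite pool has odd cardinality: if L_0 ⊆ N = {1,…,n} achieves max_{L ⊆ N, L ≠ ∅} q_{|L|}(L) with all p_i ∈ (0,1), then |L_0| is odd. -/
open Finset

noncomputable def W (p : ℕ → ℝ) (L : Finset ℕ) (k : ℕ) : ℝ :=
  ∑ I ∈ Finset.powersetCard k L, (∏ i ∈ I, p i) * ∏ j ∈ L \ I, (1 - p j)

lemma majAcc_eq_W (p : ℕ → ℝ) (L : Finset ℕ) :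
    majAcc L p = ∑ k ∈ Finset.Icc (L.card / 2 + 1) L.card, W p L k := rfl

lemma W_pos (p : ℕ → ℝ) (L : Finset ℕ) (k : ℕ)
    (hp : ∀ i ∈ L, p i ∈ Set.Ioo (0 : ℝ) 1) (hk : k ≤ L.card) : 0 < W p L k := by
  apply Finset.sum_pos
  · intro I hI
    rw [Finset.mem_powersetCard] at hI
    apply mul_pos
    · exact Finset.prod_pos fun i hi => (hp i (hI.1 hi)).1
    · exact Finset.prod_pos fun j hj => by
        have := (hp j (Finset.mem_sdiff.mp hj).1).2; linarith
  · exact Finset.powersetCard_nonempty.mpr hk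

lemma W_eq_zero (p : ℕ → ℝ) (L : Finset ℕ) (k : ℕ) (hk : L.card < k) : W p L k = 0 := by
  unfold W
  rw [Finset.powersetCard_eq_empty.mpr hk, Finset.sum_empty]

lemma W_insert (p : ℕ → ℝ) (L : Finset ℕ) (a : ℕ) (ha : a ∉ L) (k : ℕ) :
    W p (insert a L) (k + 1) = p a * W p L k + (1 - p a) * W p L (k + 1) := by
  unfold W
  rw [Finset.powersetCard_succ_insert ha]
  have hdisj : Disjoint (Finset.powersetCard (k + 1) L)
      ((Finset.powersetCard k L).image (insert a)) := by
    rw [Finset.disjoint_left]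
    intro I hI hI'
    rw [Finset.mem_powersetCard] at hI
    obtain ⟨J, hJ, rfl⟩ := Finset.mem_image.mp hI'
    exact ha (hI.1 (Finset.mem_insert_self a J))
  rw [Finset.sum_union hdisj]
  have hinj : ∀ I ∈ Finset.powersetCard k L, ∀ J ∈ Finset.powersetCard k L,
      insert a I = insert a J → I = J := by
    intro I hI J hJ h
    rw [Finset.mem_powersetCard] at hI hJ
    have haI : a ∉ I := fun hx => ha (hI.1 hx)
    have haJ : a ∉ J := fun hx => ha (hJ.1 hx)
    rw [← Finset.erase_insert haI, ← Finset.erase_insert haJ, h]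
  rw [Finset.sum_image hinj]
  have h1 : ∀ I ∈ Finset.powersetCard (k + 1) L,
      (∏ i ∈ I, p i) * ∏ j ∈ insert a L \ I, (1 - p j)
        = (1 - p a) * ((∏ i ∈ I, p i) * ∏ j ∈ L \ I, (1 - p j)) := by
    intro I hI
    rw [Finset.mem_powersetCard] at hI
    have haI : a ∉ I := fun hx => ha (hI.1 hx)
    have : insert a L \ I = insert a (L \ I) := by
      rw [Finset.insert_sdiff_of_notMem _ haI]
    rw [this, Finset.prod_insert (fun hx => ha (Finset.mem_sdiff.mp hx).1)]
    ring
  have h2 : ∀ I ∈ Finset.powersetCard k L,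
      (∏ i ∈ insert a I, p i) * ∏ j ∈ insert a L \ insert a I, (1 - p j)
        = p a * ((∏ i ∈ I, p i) * ∏ j ∈ L \ I, (1 - p j)) := by
    intro I hI
    rw [Finset.mem_powersetCard] at hI
    have haI : a ∉ I := fun hx => ha (hI.1 hx)
    have hsd : insert a L \ insert a I = L \ I := by
      ext x
      simp only [Finset.mem_sdiff, Finset.mem_insert]
      constructor
      · rintro ⟨hx1, hx2⟩
        push_neg at hx2
        rcases hx1 with rfl | hx1
        · exact absurd rfl hx2.1
        · exact ⟨hx1, hx2.2⟩
      · rintro ⟨hx1, hx2⟩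
        exact ⟨Or.inr hx1, by rintro (rfl | hx); exact ha hx1; exact hx2 hx⟩
    rw [hsd, Finset.prod_insert haI]
    ring
  rw [Finset.sum_congr rfl h1, Finset.sum_congr rfl h2, ← Finset.mul_sum, ← Finset.mul_sum]
  ring

/-- The maximizer of the majority-voting ensemble accuracy over all nonempty subsets
of a finite pool `{1,…,n}` has odd cardinality. -/
theorem maximizer_has_odd_card (n : ℕ) (p : ℕ → ℝ)
    (hp : ∀ i ∈ Finset.Icc 1 n, p i ∈ Set.Ioo (0 : ℝ) 1)
    (L₀ : Finset ℕ) (hL₀ : L₀ ⊆ Finset.Icc 1 n) (hne : L₀.Nonempty)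
    (hmax : ∀ L : Finset ℕ, L ⊆ Finset.Icc 1 n → L.Nonempty → majAcc L p ≤ majAcc L₀ p) :
    Odd L₀.card := by
  by_contra hodd
  rw [Nat.not_odd_iff_even] at hodd
  obtain ⟨k, hk⟩ := hodd
  have hkpos : 1 ≤ k := by
    rcases Nat.eq_zero_or_pos k with rfl | h
    · simp [Finset.card_eq_zero] at hk
      exact absurd hk (Finset.nonempty_iff_ne_empty.mp hne)
    · exact h
  obtain ⟨a, ha⟩ := hne
  set L' := L₀.erase a with hL'
  have haL' : a ∉ L' := Finset.notMem_erase a L₀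
  have hins : insert a L' = L₀ := Finset.insert_erase ha
  have hcard : L'.card = 2 * k - 1 := by
    rw [hL', Finset.card_erase_of_mem ha, hk]; omega
  have hcard' : L'.card + 1 = 2 * k := by omega
  have hL'sub : L' ⊆ Finset.Icc 1 n := (Finset.erase_subset a L₀).trans hL₀
  have hL'ne : L'.Nonempty := Finset.card_pos.mp (by omega)
  have hpL' : ∀ i ∈ L', p i ∈ Set.Ioo (0 : ℝ) 1 := fun i hi => hp i (hL'sub hi)
  have hpa : p a ∈ Set.Ioo (0 : ℝ) 1 := hp a (hL₀ ha)
  -- majAcc L₀ p = ∑_{j ∈ Icc (k+1) (2k)} W p L₀ j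
  have hcard₀ : L₀.card = k + k := by omega
  have hdiv : L₀.card / 2 + 1 = k + 1 := by omega
  have hdiv' : L'.card / 2 + 1 = k := by omega
  -- rewrite majAcc L₀
  have key : majAcc L₀ p = p a * majAcc L' p
      + (1 - p a) * (majAcc L' p - W p L' k) := by
    rw [majAcc_eq_W, hdiv, hcard₀]
    have step : ∀ j ∈ Finset.Icc (k + 1) (k + k),
        W p L₀ j = p a * W p L' (j - 1) + (1 - p a) * W p L' j := by
      intro j hj
      rw [Finset.mem_Icc] at hj
      obtain ⟨j', rfl⟩ : ∃ j', j = j' + 1 := ⟨j - 1, by omega⟩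
      rw [← hins, W_insert p L' a haL']
      simp
    rw [Finset.sum_congr rfl step, Finset.sum_add_distrib, ← Finset.mul_sum, ← Finset.mul_sum]
    have e1 : ∑ j ∈ Finset.Icc (k + 1) (k + k), W p L' (j - 1)
        = ∑ j ∈ Finset.Icc k (k + k - 1), W p L' j := by
      apply Finset.sum_nbij' (fun j => j - 1) (fun j => j + 1) <;>
        simp only [Finset.mem_Icc] <;> intros <;> first | trivial | omega
    have e2 : majAcc L' p = ∑ j ∈ Finset.Icc k (k + k - 1), W p L' j := by
      have hIcc : Finset.Icc (L'.card / 2 + 1) L'.card = Finset.Icc k (k + k - 1) := by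
        congr 1 <;> omega
      rw [majAcc_eq_W, hIcc]
    have e3 : ∑ j ∈ Finset.Icc (k + 1) (k + k), W p L' j
        = majAcc L' p - W p L' k := by
      have hsplit : ∑ j ∈ Finset.Icc k (k + k - 1), W p L' j
          = W p L' k + ∑ j ∈ Finset.Icc (k + 1) (k + k - 1), W p L' j := by
        rw [Finset.Icc_eq_cons_Ioc (by omega), Finset.sum_cons, ← Finset.Icc_add_one_left_eq_Ioc]
      have htop : ∑ j ∈ Finset.Icc (k + 1) (k + k), W p L' j
          = ∑ j ∈ Finset.Icc (k + 1) (k + k - 1), W p L' j + W p L' (k + k) := by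
        have : k + k = (k + k - 1) + 1 := by omega
        rw [this, Finset.sum_Icc_succ_top (by omega), ← this]
      rw [htop, W_eq_zero p L' (k + k) (by omega), add_zero, e2, hsplit]
      ring
    rw [e1, ← e2, e3]
  have hWpos : 0 < W p L' k := W_pos p L' k hpL' (by omega)
  have hlt : majAcc L₀ p < majAcc L' p := by
    rw [key]
    have h1 : 0 < 1 - p a := by have := hpa.2; linarith
    nlinarith [hpa.1, hpa.2]
  exact absurd (hmax L' hL'sub hL'ne) (not_le.mpr hlt)
end

section
/- Monotonicity of the mean majority accuracy in the (odd) ensemble size: let P_m(μ) = Σ_{k=m+1}^{2m+1} C(2m+1,k) μ^k (1−μ)^{2m+1−k} denote the majority accuracy of 2m+1 independent Bernoulli(μ) voters. If μ ∈ (1/2,1) then P_{m+1}(μ) > P_m(μ) for all m ≥ 0, and if μ ∈ (0,1/2) then P_{m+1}(μ) < P_m(μ) for all m ≥ 0. -/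
open Finset

/-- Majority accuracy of `2m+1` independent Bernoulli(μ) voters. -/
noncomputable def majOdd (m : ℕ) (μ : ℝ) : ℝ :=
  ∑ k ∈ Finset.Icc (m + 1) (2 * m + 1),
    ((2 * m + 1).choose k : ℝ) * μ ^ k * (1 - μ) ^ (2 * m + 1 - k)

/-!
Two extra voters can change the majority of `2m+1` voters only when its vote was split `m : m+1`
or `m+1 : m`. Reading this off the Pascal recurrence for binomial upper tails gives
`P_{m+1}(μ) - P_m(μ) = C(2m+1, m) (μ(1-μ))^{m+1} (2μ-1)`, whose sign is that of `2μ - 1`.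
-/

section BinomialTail

variable {R : Type*}

def binomTerm [CommSemiring R] (n k : ℕ) (x y : R) : R :=
  n.choose k * x ^ k * y ^ (n - k)

def binomTail [CommSemiring R] (n j : ℕ) (x y : R) : R :=
  ∑ k ∈ Icc j n, binomTerm n k x y

section CommSemiring

variable [CommSemiring R] (x y : R)

theorem binomTerm_of_lt {n k : ℕ} (h : n < k) : binomTerm n k x y = 0 := by
  simp [binomTerm, Nat.choose_eq_zero_of_lt h]

theorem binomTerm_succ_succ (n k : ℕ) :
    binomTerm (n + 1) (k + 1) x y = x * binomTerm n k x y + y * binomTerm n (k + 1) x y := by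
  rcases lt_or_ge k n with hkn | hnk
  · obtain ⟨d, rfl⟩ := Nat.exists_eq_add_of_lt hkn
    simp only [binomTerm, Nat.choose_succ_succ, Nat.cast_add,
      show k + d + 1 + 1 - (k + 1) = d + 1 by omega, show k + d + 1 - k = d + 1 by omega,
      show k + d + 1 - (k + 1) = d by omega]
    ring
  · rw [binomTerm_of_lt x y (show n < k + 1 by omega), mul_zero, add_zero]
    simp only [binomTerm, Nat.choose_succ_succ, Nat.choose_eq_zero_of_lt (show n < k + 1 by omega),
      add_zero, Nat.add_sub_add_right]
    ring

theorem binomTail_eq_binomTerm_add {n j : ℕ} (h : j ≤ n) :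
    binomTail n j x y = binomTerm n j x y + binomTail n (j + 1) x y := by
  rw [binomTail, binomTail, ← add_sum_Ioc_eq_sum_Icc h, Icc_add_one_left_eq_Ioc]

theorem binomTail_succ_succ (n j : ℕ) :
    binomTail (n + 1) (j + 1) x y = x * binomTail n j x y + y * binomTail n (j + 1) x y := by
  have hshift :
      binomTail (n + 1) (j + 1) x y = ∑ k ∈ Icc j n, binomTerm (n + 1) (k + 1) x y := by
    rw [binomTail, ← map_add_right_Icc, sum_map]
    rfl
  have htop : ∑ k ∈ Icc j n, binomTerm n (k + 1) x y = binomTail n (j + 1) x y := by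
    calc ∑ k ∈ Icc j n, binomTerm n (k + 1) x y
        = ∑ k ∈ Icc (j + 1) (n + 1), binomTerm n k x y := by
          rw [← map_add_right_Icc, sum_map]
          rfl
      _ = binomTail n (j + 1) x y := by
          refine (sum_subset (Icc_subset_Icc_right n.le_succ) fun k hk hk' => ?_).symm
          simp only [mem_Icc] at hk hk'
          exact binomTerm_of_lt x y (by omega)
  rw [hshift, binomTail, ← htop, mul_sum, mul_sum, ← sum_add_distrib]
  exact sum_congr rfl fun k _ => binomTerm_succ_succ x y n k

end CommSemiring

section CommRing

variable [CommRing R] {x y : R}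

theorem binomTail_succ_succ_eq_add (hxy : x + y = 1) {n j : ℕ} (h : j ≤ n) :
    binomTail (n + 1) (j + 1) x y = binomTail n (j + 1) x y + x * binomTerm n j x y := by
  rw [binomTail_succ_succ, binomTail_eq_binomTerm_add x y h]
  linear_combination binomTail n (j + 1) x y * hxy

theorem binomTail_succ_succ_eq_sub (hxy : x + y = 1) {n j : ℕ} (h : j ≤ n) :
    binomTail (n + 1) (j + 1) x y = binomTail n j x y - y * binomTerm n j x y := by
  rw [binomTail_succ_succ, binomTail_eq_binomTerm_add x y h]
  linear_combination (binomTerm n j x y + binomTail n (j + 1) x y) * hxy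

end CommRing

end BinomialTail

theorem majOdd_eq_binomTail (m : ℕ) (μ : ℝ) :
    majOdd m μ = binomTail (2 * m + 1) (m + 1) μ (1 - μ) :=
  rfl

theorem majOdd_succ_sub (m : ℕ) (μ : ℝ) :
    majOdd (m + 1) μ - majOdd m μ =
      (2 * m + 1).choose m * (μ * (1 - μ)) ^ (m + 1) * (2 * μ - 1) := by
  have hμ : μ + (1 - μ) = 1 := add_sub_cancel μ 1
  have hstep : majOdd (m + 1) μ =
      majOdd m μ + μ * binomTerm (2 * m + 1) m μ (1 - μ)
        - (1 - μ) * binomTerm (2 * m + 2) (m + 1) μ (1 - μ) := by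
    rw [majOdd_eq_binomTail, majOdd_eq_binomTail, show 2 * (m + 1) + 1 = 2 * m + 2 + 1 by ring,
      binomTail_succ_succ_eq_sub hμ (by omega), binomTail_succ_succ_eq_add hμ (by omega)]
  have hcentral : (2 * m + 2).choose (m + 1) = 2 * (2 * m + 1).choose m := by
    rw [Nat.choose_succ_succ, Nat.choose_symm_half]
    ring
  rw [hstep, binomTerm, binomTerm, hcentral, show 2 * m + 1 - m = m + 1 by omega,
    show 2 * m + 2 - (m + 1) = m + 1 by omega, mul_pow]
  push_cast
  ring

/-- Monotonicity of the mean majority accuracy in the (odd) ensemble size: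
if `μ ∈ (1/2,1)` then `P_{m+1}(μ) > P_m(μ)`; if `μ ∈ (0,1/2)` then `P_{m+1}(μ) < P_m(μ)`. -/
theorem majOdd_monotone (μ : ℝ) :
    (μ ∈ Set.Ioo (1/2 : ℝ) 1 → ∀ m : ℕ, majOdd m μ < majOdd (m + 1) μ) ∧
    (μ ∈ Set.Ioo (0 : ℝ) (1/2) → ∀ m : ℕ, majOdd (m + 1) μ < majOdd m μ) := by
  have hcoeff : ∀ m : ℕ, 0 < μ → μ < 1 →
      0 < ((2 * m + 1).choose m : ℝ) * (μ * (1 - μ)) ^ (m + 1) := fun m h₀ h₁ => by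
    have : 0 < μ * (1 - μ) := mul_pos h₀ (sub_pos.2 h₁)
    have : 0 < (2 * m + 1).choose m := Nat.choose_pos (by omega)
    positivity
  refine ⟨fun ⟨hlo, hhi⟩ m => ?_, fun ⟨hlo, hhi⟩ m => ?_⟩
  · rw [← sub_pos, majOdd_succ_sub]
    exact mul_pos (hcoeff m (by linarith) hhi) (by linarith)
  · rw [← sub_neg, majOdd_succ_sub]
    exact mul_neg_of_pos_of_neg (hcoeff m hlo (by linarith)) (by linarith)
end

section
/- Worst-case tie for greedy forward selection: let 0 < ε ≤ 1/2, p_1 = 1/2 + ε, and p_2 = p_3 = 1/2 + α with α = (1 − √(1 − 4ε²))/(4ε). Then 0 < α < ε and the 3-member majority accuracy satisfies q_3 = p_1 p_2 + p_2 p_3 + p_1 p_3 − 2 p_1 p_2 p_3 = 1/2 + ε = p_1, i.e., extending the singleton ensemble {1} by {2,3} gives no improvement. -/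
/-- Worst-case tie for greedy forward selection: for `0 < ε < 1/2`, with
`p₁ = 1/2 + ε`, `p₂ = p₃ = 1/2 + α` where `α = (1 − √(1 − 4ε²))/(4ε)`, we have
`0 < α < ε` and the 3-member majority accuracy equals `p₁ = 1/2 + ε`, so extending
the singleton ensemble gives no improvement. -/
theorem greedy_worst_case_tie (ε : ℝ) (hε : 0 < ε) (hε' : ε < 1/2) :
    let α : ℝ := (1 - Real.sqrt (1 - 4 * ε ^ 2)) / (4 * ε)
    let p₁ : ℝ := 1/2 + ε
    let p₂ : ℝ := 1/2 + α
    let p₃ : ℝ := 1/2 + α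
    0 < α ∧ α < ε ∧
      p₁ * p₂ + p₂ * p₃ + p₁ * p₃ - 2 * (p₁ * p₂ * p₃) = 1/2 + ε := by
  intro α p₁ p₂ p₃
  have hpos : (0:ℝ) < 1 - 4 * ε ^ 2 := by nlinarith
  set s : ℝ := Real.sqrt (1 - 4 * ε ^ 2) with hs
  have hs2 : s ^ 2 = 1 - 4 * ε ^ 2 := Real.sq_sqrt (le_of_lt hpos)
  have hs0 : 0 < s := Real.sqrt_pos.mpr hpos
  have hs1 : s < 1 := by
    nlinarith [hs2, hs0]
  have hα : α = (1 - s) / (4 * ε) := rfl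
  have h4ε : (4 : ℝ) * ε ≠ 0 := by positivity
  refine ⟨div_pos (by linarith) (by positivity), ?_, ?_⟩
  · rw [hα, div_lt_iff₀ (by positivity)]
    nlinarith
  · have hq : 4 * ε * α ^ 2 - 2 * α + ε = 0 := by
      rw [hα]
      field_simp
      nlinarith [hs2]
    show (1/2 + ε) * (1/2 + α) + (1/2 + α) * (1/2 + α) + (1/2 + ε) * (1/2 + α)
        - 2 * ((1/2 + ε) * (1/2 + α) * (1/2 + α)) = 1/2 + ε
    nlinarith [hq]
end

section
/- With identical member accuracy 1/2 + α, α ∈ (0,1/2), the majority accuracy of 2m+1 members tends to 1 as m → ∞: lim_{m→∞} Σ_{k=m+1}^{2m+1} C(2m+1,k) (1/2+α)^k (1/2−α)^{2m+1−k} = 1. -/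
/-!
Write `p = 1/2 + α` and `q = 1/2 - α`. Each lower-tail term `C(2m+1, k) p^k q^(2m+1-k)`
with `k ≤ m` is at most `C(2m+1, k) p^m q^(m+1)` since `q ≤ p`, so the lower tail is at most
`2^(2m+1) p^m q^(m+1) = 2q (4pq)^m`, and `4pq = 1 - 4α² < 1`.
-/

open Finset Filter

section BinomialTail

variable {p q : ℝ} {k m n : ℕ}

theorem pow_mul_pow_sub_le_of_le (hq : 0 ≤ q) (hqp : q ≤ p) (hkm : k ≤ m) (hmn : m ≤ n) :
    p ^ k * q ^ (n - k) ≤ p ^ m * q ^ (n - m) :=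
  have hp : 0 ≤ p := hq.trans hqp
  calc p ^ k * q ^ (n - k) = p ^ k * q ^ (m - k) * q ^ (n - m) := by
        rw [mul_assoc, ← pow_add]; congr 2; omega
    _ ≤ p ^ k * p ^ (m - k) * q ^ (n - m) := by gcongr
    _ = p ^ m * q ^ (n - m) := by rw [← pow_add, Nat.add_sub_cancel' hkm]

theorem sum_range_choose_mul_pow_le (hq : 0 ≤ q) (hqp : q ≤ p) (hmn : m ≤ n) :
    ∑ k ∈ range (m + 1), (n.choose k : ℝ) * p ^ k * q ^ (n - k) ≤ 2 ^ n * (p ^ m * q ^ (n - m)) :=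
  have hp : 0 ≤ p := hq.trans hqp
  calc ∑ k ∈ range (m + 1), (n.choose k : ℝ) * p ^ k * q ^ (n - k)
      ≤ ∑ k ∈ range (m + 1), (n.choose k : ℝ) * (p ^ m * q ^ (n - m)) := by
        refine sum_le_sum fun k hk => ?_
        rw [mul_assoc]
        exact mul_le_mul_of_nonneg_left
          (pow_mul_pow_sub_le_of_le hq hqp (Nat.lt_succ_iff.mp (mem_range.mp hk)) hmn)
          (Nat.cast_nonneg _)
    _ ≤ ∑ k ∈ range (n + 1), (n.choose k : ℝ) * (p ^ m * q ^ (n - m)) :=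
        sum_le_sum_of_subset_of_nonneg (range_subset_range.mpr (by omega))
          fun _ _ _ => by positivity
    _ = 2 ^ n * (p ^ m * q ^ (n - m)) := by
        rw [← sum_mul, ← Nat.cast_sum, Nat.sum_range_choose, Nat.cast_pow, Nat.cast_ofNat]

theorem sum_Icc_choose_mul_pow_eq_one_sub (hpq : p + q = 1) (hmn : m ≤ n) :
    ∑ k ∈ Icc (m + 1) n, (n.choose k : ℝ) * p ^ k * q ^ (n - k) =
      1 - ∑ k ∈ range (m + 1), (n.choose k : ℝ) * p ^ k * q ^ (n - k) := by
  have binomial_sum := add_pow p q n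
  rw [hpq, one_pow] at binomial_sum
  rw [eq_sub_iff_add_eq, add_comm, ← Ico_add_one_right_eq_Icc,
    sum_range_add_sum_Ico _ (by omega : m + 1 ≤ n + 1), binomial_sum]
  exact sum_congr rfl fun k _ => by ring

end BinomialTail

/-- With identical member accuracy `1/2 + α`, `α ∈ (0,1/2)`, the majority accuracy of
`2m+1` independent voters tends to 1 as `m → ∞`. -/
theorem majority_tendsto_one (α : ℝ) (hα : α ∈ Set.Ioo (0 : ℝ) (1/2)) :
    Tendsto (fun m : ℕ => ∑ k ∈ Finset.Icc (m + 1) (2 * m + 1),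
        ((2 * m + 1).choose k : ℝ) * (1/2 + α) ^ k * (1/2 - α) ^ (2 * m + 1 - k))
      atTop (nhds 1) := by
  obtain ⟨hα0, hα2⟩ := hα
  have hq : 0 ≤ 1/2 - α := by linarith
  have hqp : 1/2 - α ≤ 1/2 + α := by linarith
  have hpq_lt_one : 4 * (1/2 + α) * (1/2 - α) < 1 := by nlinarith
  set p : ℝ := 1/2 + α
  set q : ℝ := 1/2 - α
  have lower_tail_le (m : ℕ) :
      ∑ k ∈ range (m + 1), ((2 * m + 1).choose k : ℝ) * p ^ k * q ^ (2 * m + 1 - k) ≤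
        2 * q * (4 * p * q) ^ m :=
    (sum_range_choose_mul_pow_le hq hqp (by omega)).trans_eq <| by
      rw [show 2 * m + 1 - m = m + 1 by omega, pow_succ, pow_succ, pow_mul, mul_pow, mul_pow]
      ring
  have geometric_tendsto_zero : Tendsto (fun m : ℕ => 2 * q * (4 * p * q) ^ m) atTop (nhds 0) := by
    simpa using (tendsto_pow_atTop_nhds_zero_of_lt_one (by positivity) hpq_lt_one).const_mul (2 * q)
  have lower_tail_tendsto_zero := squeeze_zero (fun m => by positivity) lower_tail_le
    geometric_tendsto_zero
  refine ((tendsto_const_nhds (x := (1 : ℝ))).sub lower_tail_tendsto_zero).congr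
    (fun m => (sum_Icc_choose_mul_pow_eq_one_sub (by ring) (by omega)).symm) |>.trans ?_
  rw [sub_zero]
end

section
/- For three independent voters each with accuracy 1/2 + ε, the majority accuracy is q_3 = 3(1/2+ε)²(1/2−ε) + (1/2+ε)³, and lim_{ε→0⁺} q_3 = 1/2; in particular a usefulness-based (accuracy/cost) backward greedy selection keeping these three members instead of a single perfect member of cost T incurs error approaching 1/2. -/
open Finset Filter

/-- For three independent voters each with accuracy `1/2 + ε`, the majority accuracy is
`q₃ = 3(1/2+ε)²(1/2−ε) + (1/2+ε)³`, and `q₃ → 1/2` as `ε → 0⁺`. -/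
theorem three_equal_voters_accuracy :
    (∀ ε : ℝ, 0 < ε → ε < 1/2 →
      majAcc (Finset.univ : Finset (Fin 3)) (fun _ => 1/2 + ε)
        = 3 * (1/2 + ε) ^ 2 * (1/2 - ε) + (1/2 + ε) ^ 3) ∧
    Tendsto (fun ε : ℝ => 3 * (1/2 + ε) ^ 2 * (1/2 - ε) + (1/2 + ε) ^ 3)
      (nhdsWithin 0 (Set.Ioi 0)) (nhds (1/2)) := by
  constructor
  · intro ε _ _
    unfold majAcc
    have hc : (Finset.univ : Finset (Fin 3)).card = 3 := by simp
    rw [hc]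
    have key : ∀ k : ℕ, ∀ I ∈ Finset.powersetCard k (Finset.univ : Finset (Fin 3)),
        ((∏ _i ∈ I, (1/2 + ε)) * ∏ _j ∈ (Finset.univ : Finset (Fin 3)) \ I, (1 - (1/2 + ε)))
          = (1/2 + ε) ^ k * (1/2 - ε) ^ (3 - k) := by
      intro k I hI
      rw [Finset.mem_powersetCard] at hI
      rw [Finset.prod_const, Finset.prod_const, hI.2, Finset.card_sdiff_of_subset hI.1, Finset.card_univ,
        hI.2]
      have : (1:ℝ) - (1/2 + ε) = 1/2 - ε := by ring
      rw [this, Fintype.card_fin]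
    rw [show Finset.Icc (3/2+1 : ℕ) 3 = {2, 3} from by decide]
    rw [Finset.sum_insert (by decide), Finset.sum_singleton]
    rw [Finset.sum_congr rfl (key 2), Finset.sum_congr rfl (key 3),
      Finset.sum_const, Finset.sum_const, Finset.card_powersetCard, Finset.card_powersetCard,
      Finset.card_univ]
    simp [Fintype.card_fin]
    ring
  · have h : Tendsto (fun ε : ℝ => 3 * (1/2 + ε) ^ 2 * (1/2 - ε) + (1/2 + ε) ^ 3)
        (nhds 0) (nhds (3 * (1/2 + 0) ^ 2 * (1/2 - 0) + (1/2 + 0) ^ 3)) := by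
      apply Continuous.tendsto
      fun_prop
    have h2 : Tendsto (fun ε : ℝ => 3 * (1/2 + ε) ^ 2 * (1/2 - ε) + (1/2 + ε) ^ 3)
        (nhdsWithin 0 (Set.Ioi 0)) (nhds (3 * (1/2 + 0) ^ 2 * (1/2 - 0) + (1/2 + 0) ^ 3)) :=
      h.mono_left nhdsWithin_le_nhds
    norm_num at h2
    exact h2
end

section
/- Variance vanishing for i.i.d. majority voting: let p_1, p_2, … be i.i.d. random variables in [0,1] with mean μ ≠ 1/2 and variance σ² satisfying μ(1−μ) − σ² > 0 and σ² + μ² ≠ 1/2, and let q_ℓ = Σ_{k=⌊ℓ/2⌋+1}^{ℓ} Σ_{I⊆{1,…,ℓ},|I|=k} ∏_{i∈I} p_i ∏_{j∉I}(1−p_j). Then Var(q_ℓ) → 0 as ℓ → ∞. -/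
/-!
Every term of `q_ℓ` is a product of independent factors `p_i` and `1 - p_j`, so by independence
`E q_ℓ` is the probability `P(Bin(ℓ, m) > ℓ/2)`, a sum of Bernstein basis polynomials at `m`.
Since `0 ≤ q_ℓ ≤ 1`, the Bhatia–Davis inequality gives `Var q_ℓ ≤ E q_ℓ (1 - E q_ℓ)`, and by
Chebyshev's inequality for the binomial distribution (the variance identity of the Bernstein
polynomials) `E q_ℓ` tends to `0` if `m < 1/2` and to `1` if `m > 1/2`.
-/

open Finset Filter MeasureTheory ProbabilityTheory Topology

lemma ProbabilityTheory.iIndepFun.integral_finsetProd_eq_prod_integral {ι Ω : Type*}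
    [MeasurableSpace Ω] {μ : Measure Ω} {X : ι → Ω → ℝ} (hX : iIndepFun X μ)
    (mX : ∀ i, AEStronglyMeasurable (X i) μ) (s : Finset ι) :
    ∫ ω, ∏ i ∈ s, X i ω ∂μ = ∏ i ∈ s, ∫ ω, X i ω ∂μ := by
  simpa [← prod_coe_sort s] using
    (hX.precomp (g := ((↑) : s → ι)) Subtype.val_injective).integral_fun_prod_eq_prod_integral
      fun i => mX i

section

variable {ι : Type*} [DecidableEq ι]

lemma sum_powerset_prod_mul_prod_sdiff_one_sub (L : Finset ι) (p : ι → ℝ) :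
    ∑ I ∈ L.powerset, (∏ i ∈ I, p i) * ∏ j ∈ L \ I, (1 - p j) = 1 := by
  rw [← prod_add]; simp

lemma prod_mul_prod_sdiff_one_sub_mem_Icc {p : ι → ℝ} (hp : ∀ i, p i ∈ Set.Icc (0 : ℝ) 1)
    (L I : Finset ι) : (∏ i ∈ I, p i) * ∏ j ∈ L \ I, (1 - p j) ∈ Set.Icc (0 : ℝ) 1 := by
  have h₀ : ∀ i, 0 ≤ 1 - p i := fun i => sub_nonneg.2 (hp i).2
  have h₁ : ∀ i, 1 - p i ≤ 1 := fun i => sub_le_self _ (hp i).1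
  exact ⟨mul_nonneg (prod_nonneg fun i _ => (hp i).1) (prod_nonneg fun j _ => h₀ j),
    mul_le_one₀ (prod_le_one (fun i _ => (hp i).1) fun i _ => (hp i).2)
      (prod_nonneg fun j _ => h₀ j) (prod_le_one (fun j _ => h₀ j) fun j _ => h₁ j)⟩

lemma majAcc_mem_Icc {p : ι → ℝ} (hp : ∀ i, p i ∈ Set.Icc (0 : ℝ) 1) (L : Finset ι) :
    majAcc L p ∈ Set.Icc (0 : ℝ) 1 := by
  have hterm := fun I => (prod_mul_prod_sdiff_one_sub_mem_Icc hp L I).1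
  refine ⟨sum_nonneg fun k _ => sum_nonneg fun I _ => hterm I, ?_⟩
  calc majAcc L p
      ≤ ∑ k ∈ range (L.card + 1), ∑ I ∈ powersetCard k L,
          (∏ i ∈ I, p i) * ∏ j ∈ L \ I, (1 - p j) :=
        sum_le_sum_of_subset_of_nonneg
          (fun k hk => by simp only [mem_Icc, mem_range] at hk ⊢; omega)
          fun k _ _ => sum_nonneg fun I _ => hterm I
    _ = ∑ I ∈ L.powerset, (∏ i ∈ I, p i) * ∏ j ∈ L \ I, (1 - p j) := by
        rw [powerset_card_disjiUnion]; exact (sum_disjiUnion _ _ _).symm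
    _ = 1 := sum_powerset_prod_mul_prod_sdiff_one_sub L p

section

variable {Ω : Type*} [MeasurableSpace Ω] {μ : Measure Ω} {p : ι → Ω → ℝ}

lemma measurable_majAcc (hmeas : ∀ i, Measurable (p i)) (L : Finset ι) :
    Measurable fun ω => majAcc L fun i => p i ω := by
  unfold majAcc; fun_prop

lemma integral_prod_mul_prod_sdiff_one_sub (hindep : iIndepFun p μ)
    (hmeas : ∀ i, Measurable (p i)) (hint : ∀ i, Integrable (p i) μ) (L I : Finset ι) :
    ∫ ω, (∏ i ∈ I, p i ω) * ∏ j ∈ L \ I, (1 - p j ω) ∂μ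
      = (∏ i ∈ I, ∫ ω, p i ω ∂μ) * ∏ j ∈ L \ I, (1 - ∫ ω, p j ω ∂μ) := by
  have := hindep.isProbabilityMeasure
  let φ : ι → ℝ → ℝ := fun i x => if i ∈ I then x else 1 - x
  have split (f : ι → ℝ) :
      ∏ k ∈ I ∪ L \ I, φ k (f k) = (∏ i ∈ I, f i) * ∏ j ∈ L \ I, (1 - f j) := by
    rw [prod_union disjoint_sdiff]
    congr 1 <;> refine prod_congr rfl fun k hk => ?_
    · simp [φ, hk]
    · simp [φ, (mem_sdiff.1 hk).2]
  have hφ : ∀ k, Measurable (φ k) := fun k => by dsimp only [φ]; split_ifs <;> fun_prop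
  have hφint : ∀ k, ∫ ω, φ k (p k ω) ∂μ = φ k (∫ ω, p k ω ∂μ) := fun k => by
    dsimp only [φ]; split_ifs
    · rfl
    · rw [integral_sub (integrable_const 1) (hint k)]; simp
  calc ∫ ω, (∏ i ∈ I, p i ω) * ∏ j ∈ L \ I, (1 - p j ω) ∂μ
      = ∫ ω, ∏ k ∈ I ∪ L \ I, φ k (p k ω) ∂μ := by simp only [split]
    _ = ∏ k ∈ I ∪ L \ I, ∫ ω, φ k (p k ω) ∂μ :=
        (hindep.comp φ hφ).integral_finsetProd_eq_prod_integral
          (fun k => ((hφ k).comp (hmeas k)).aestronglyMeasurable) _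
    _ = _ := by simp only [hφint, split]

lemma integral_majAcc (hindep : iIndepFun p μ) (hmeas : ∀ i, Measurable (p i))
    (hp : ∀ i ω, p i ω ∈ Set.Icc (0 : ℝ) 1) (L : Finset ι) :
    ∫ ω, majAcc L (fun i => p i ω) ∂μ = majAcc L (fun i => ∫ ω, p i ω ∂μ) := by
  have := hindep.isProbabilityMeasure
  have hint : ∀ i, Integrable (p i) μ := fun i =>
    .of_mem_Icc 0 1 (hmeas i).aemeasurable (ae_of_all _ (hp i))
  have htint (I : Finset ι) :
      Integrable (fun ω => (∏ i ∈ I, p i ω) * ∏ j ∈ L \ I, (1 - p j ω)) μ :=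
    .of_mem_Icc 0 1 (by fun_prop)
      (ae_of_all _ fun ω => prod_mul_prod_sdiff_one_sub_mem_Icc (fun i => hp i ω) L I)
  unfold majAcc
  rw [integral_finsetSum _ fun k _ => integrable_finsetSum _ fun I _ => htint I]
  refine sum_congr rfl fun k _ => ?_
  rw [integral_finsetSum _ fun I _ => htint I]
  exact sum_congr rfl fun I _ => integral_prod_mul_prod_sdiff_one_sub hindep hmeas hint L I

end

end

lemma eval_bernsteinPolynomial (n k : ℕ) (x : ℝ) :
    (bernsteinPolynomial ℝ n k).eval x = n.choose k * x ^ k * (1 - x) ^ (n - k) := by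
  simp [bernsteinPolynomial]

lemma sum_eval_bernsteinPolynomial (n : ℕ) (x : ℝ) :
    ∑ k ∈ range (n + 1), (bernsteinPolynomial ℝ n k).eval x = 1 := by
  simpa [Polynomial.eval_finsetSum] using
    congrArg (Polynomial.eval x) (bernsteinPolynomial.sum ℝ n)

lemma sum_sq_mul_eval_bernsteinPolynomial (n : ℕ) (x : ℝ) :
    ∑ k ∈ range (n + 1), (n * x - k) ^ 2 * (bernsteinPolynomial ℝ n k).eval x
      = n * x * (1 - x) := by
  simpa [Polynomial.eval_finsetSum] using
    congrArg (Polynomial.eval x) (bernsteinPolynomial.variance ℝ n)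

lemma eval_bernsteinPolynomial_nonneg (n k : ℕ) {x : ℝ} (hx : x ∈ Set.Icc (0 : ℝ) 1) :
    0 ≤ (bernsteinPolynomial ℝ n k).eval x := by
  have h₀ := hx.1
  have h₁ := sub_nonneg.2 hx.2
  rw [eval_bernsteinPolynomial]
  positivity

lemma sq_mul_sum_eval_bernsteinPolynomial_le {n : ℕ} {x δ : ℝ} (hx : x ∈ Set.Icc (0 : ℝ) 1)
    {s : Finset ℕ} (hs : s ⊆ range (n + 1)) (hfar : ∀ k ∈ s, δ ^ 2 ≤ (n * x - k) ^ 2) :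
    δ ^ 2 * ∑ k ∈ s, (bernsteinPolynomial ℝ n k).eval x ≤ n * x * (1 - x) := by
  have hb := fun k => eval_bernsteinPolynomial_nonneg n k hx
  calc δ ^ 2 * ∑ k ∈ s, (bernsteinPolynomial ℝ n k).eval x
      ≤ ∑ k ∈ s, (n * x - k) ^ 2 * (bernsteinPolynomial ℝ n k).eval x := by
        rw [mul_sum]
        exact sum_le_sum fun k hk => mul_le_mul_of_nonneg_right (hfar k hk) (hb k)
    _ ≤ ∑ k ∈ range (n + 1), (n * x - k) ^ 2 * (bernsteinPolynomial ℝ n k).eval x :=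
        sum_le_sum_of_subset_of_nonneg hs fun k _ _ => mul_nonneg (sq_nonneg _) (hb k)
    _ = n * x * (1 - x) := sum_sq_mul_eval_bernsteinPolynomial n x

noncomputable def binomialMajorityProb (n : ℕ) (x : ℝ) : ℝ :=
  ∑ k ∈ Icc (n / 2 + 1) n, (bernsteinPolynomial ℝ n k).eval x

lemma majAcc_const {ι : Type*} [DecidableEq ι] (L : Finset ι) (x : ℝ) :
    majAcc L (fun _ => x) = binomialMajorityProb L.card x := by
  refine sum_congr rfl fun k _ => ?_
  rw [sum_congr rfl fun I hI => by
      rw [prod_const, prod_const, card_sdiff_of_subset (mem_powersetCard.1 hI).1,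
        (mem_powersetCard.1 hI).2],
    sum_const, card_powersetCard, nsmul_eq_mul, eval_bernsteinPolynomial, mul_assoc]

lemma tendsto_sum_eval_bernsteinPolynomial_of_far {x c : ℝ} (hx : x ∈ Set.Icc (0 : ℝ) 1)
    (hc : c ≠ 0) {s : ℕ → Finset ℕ} (hs : ∀ n, s n ⊆ range (n + 1))
    (hfar : ∀ n, ∀ k ∈ s n, (n * c) ^ 2 ≤ (n * x - k) ^ 2) :
    Tendsto (fun n => ∑ k ∈ s n, (bernsteinPolynomial ℝ n k).eval x) atTop (𝓝 0) := by
  refine tendsto_of_tendsto_of_tendsto_of_le_of_le' tendsto_const_nhds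
    (tendsto_const_div_atTop_nhds_zero_nat (x * (1 - x) / c ^ 2))
    (.of_forall fun n => sum_nonneg fun k _ => eval_bernsteinPolynomial_nonneg n k hx) ?_
  filter_upwards [eventually_gt_atTop 0] with n hn
  have hn' : (0 : ℝ) < n := Nat.cast_pos.2 hn
  have key := sq_mul_sum_eval_bernsteinPolynomial_le hx (hs n) (hfar n)
  rw [div_div, le_div_iff₀ (by positivity)]
  refine le_of_mul_le_mul_left ?_ hn'
  linarith

lemma one_sub_binomialMajorityProb (n : ℕ) (x : ℝ) :
    1 - binomialMajorityProb n x
      = ∑ k ∈ range (n / 2 + 1), (bernsteinPolynomial ℝ n k).eval x := by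
  rw [← sum_eval_bernsteinPolynomial n x, binomialMajorityProb, ← Ico_add_one_right_eq_Icc,
    ← sum_range_add_sum_Ico _ (by omega : n / 2 + 1 ≤ n + 1), add_sub_cancel_right]

lemma tendsto_binomialMajorityProb_mul_one_sub {x : ℝ} (hx : x ∈ Set.Icc (0 : ℝ) 1)
    (hx' : x ≠ 1 / 2) :
    Tendsto (fun n => binomialMajorityProb n x * (1 - binomialMajorityProb n x)) atTop (𝓝 0) := by
  rcases hx'.lt_or_gt with hlt | hgt
  · have h : Tendsto (binomialMajorityProb · x) atTop (𝓝 0) :=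
      tendsto_sum_eval_bernsteinPolynomial_of_far hx (sub_ne_zero.2 hlt.ne')
        (fun n k hk => by simp only [mem_Icc, mem_range] at hk ⊢; omega) fun n k hk => by
          have : (n : ℝ) ≤ 2 * k := by
            exact_mod_cast (by simp only [mem_Icc] at hk; omega : n ≤ 2 * k)
          rw [show ((n : ℝ) * x - k) ^ 2 = (k - n * x) ^ 2 by ring]
          exact pow_le_pow_left₀ (by nlinarith) (by linarith) 2
    simpa using h.mul (tendsto_const_nhds.sub h)
  · have h : Tendsto (1 - binomialMajorityProb · x) atTop (𝓝 0) := by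
      simp_rw [one_sub_binomialMajorityProb]
      exact tendsto_sum_eval_bernsteinPolynomial_of_far hx (sub_ne_zero.2 hgt.ne')
        (fun n k hk => by simp only [mem_range] at hk ⊢; omega) fun n k hk => by
          have : (2 * k : ℝ) ≤ n := by
            exact_mod_cast (by simp only [mem_range] at hk; omega : 2 * k ≤ n)
          exact pow_le_pow_left₀ (by nlinarith) (by linarith) 2
    have h' : Tendsto (binomialMajorityProb · x) atTop (𝓝 1) := by
      simpa using tendsto_const_nhds (x := (1 : ℝ)) |>.sub h
    simpa using h'.mul h

theorem variance_majAcc_tendsto_zero_general {Ω : Type*} [MeasurableSpace Ω] (μ : Measure Ω)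
    [IsProbabilityMeasure μ] (p : ℕ → Ω → ℝ) (hmeas : ∀ i, Measurable (p i))
    (hindep : iIndepFun p μ)
    (hident : ∀ i, IdentDistrib (p i) (p 0) μ μ)
    (hbdd : ∀ i, ∀ ω, p i ω ∈ Set.Icc (0 : ℝ) 1)
    (m : ℝ) (hm : m = ∫ ω, p 0 ω ∂μ)
    (hm' : m ≠ 1/2) :
    Tendsto (fun ℓ : ℕ => variance (fun ω => majAcc (Finset.range ℓ) (fun i => p i ω)) μ)
      atTop (nhds 0) := by
  have hm01 : m ∈ Set.Icc (0 : ℝ) 1 := by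
    rw [hm]
    exact ⟨integral_nonneg fun ω => (hbdd 0 ω).1, by
      simpa using integral_mono (μ := μ)
        (.of_mem_Icc 0 1 (hmeas 0).aemeasurable (ae_of_all _ (hbdd 0)))
        (integrable_const 1) fun ω => (hbdd 0 ω).2⟩
  have hmean (ℓ : ℕ) :
      ∫ ω, majAcc (range ℓ) (fun i => p i ω) ∂μ = binomialMajorityProb ℓ m := by
    simp_rw [integral_majAcc hindep hmeas hbdd, (hident _).integral_eq, ← hm, majAcc_const,
      card_range]
  refine squeeze_zero (fun ℓ => variance_nonneg _ _) (fun ℓ => ?_)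
    (tendsto_binomialMajorityProb_mul_one_sub hm01 hm')
  calc variance (fun ω => majAcc (range ℓ) (fun i => p i ω)) μ
      ≤ (1 - ∫ ω, majAcc (range ℓ) (fun i => p i ω) ∂μ)
          * (∫ ω, majAcc (range ℓ) (fun i => p i ω) ∂μ - 0) :=
        variance_le_sub_mul_sub (ae_of_all _ fun ω => majAcc_mem_Icc (fun i => hbdd i ω) _)
          (measurable_majAcc hmeas _).aemeasurable
    _ = binomialMajorityProb ℓ m * (1 - binomialMajorityProb ℓ m) := by rw [hmean]; ring

/-- Variance vanishing for i.i.d. majority voting: for i.i.d. accuracies in `[0,1]` with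
mean `μ ≠ 1/2` and variance `σ²` such that `μ(1−μ) − σ² > 0` and `σ² + μ² ≠ 1/2`,
`Var(q_ℓ) → 0` as `ℓ → ∞`. -/
theorem variance_majAcc_tendsto_zero {Ω : Type*} [MeasurableSpace Ω] (μ : Measure Ω)
    [IsProbabilityMeasure μ] (p : ℕ → Ω → ℝ) (hmeas : ∀ i, Measurable (p i))
    (hindep : iIndepFun p μ)
    (hident : ∀ i, IdentDistrib (p i) (p 0) μ μ)
    (hbdd : ∀ i, ∀ ω, p i ω ∈ Set.Icc (0 : ℝ) 1)
    (m σ2 : ℝ) (hm : m = ∫ ω, p 0 ω ∂μ) (hσ : σ2 = variance (p 0) μ)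
    (hm' : m ≠ 1/2) (hpos : 0 < m * (1 - m) - σ2) (hsT : σ2 + m ^ 2 ≠ 1/2) :
    Tendsto (fun ℓ : ℕ => variance (fun ω => majAcc (Finset.range ℓ) (fun i => p i ω)) μ)
      atTop (nhds 0) :=
  variance_majAcc_tendsto_zero_general μ p hmeas hindep hident hbdd m hm hm'
end

section
/- Covariance expansion for the majority accuracy of i.i.d. members: with s_T = σ²+μ², s_F = σ²+(1−μ)², s_TF = μ(1−μ)−σ² and k_ℓ = ⌊ℓ/2⌋+1, the second moment satisfies E[q_ℓ²] = Σ_{k=k_ℓ}^{ℓ} Σ_{m=1}^{k} Σ_{h=k_ℓ−m}^{ℓ−k} 𝟙[k_ℓ−m ≤ ℓ−k] C(ℓ,k) C(k,m) C(ℓ−k,h) s_T^m s_TF^{k−m+h} s_F^{ℓ−k−h}, so Var(q_ℓ) equals this sum minus (E[q_ℓ])². -/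
open Finset MeasureTheory ProbabilityTheory

/-!
Write `q = ∑ I, w I` over the majority vote patterns `I`, where
`w I = ∏ i ∈ I, p i * ∏ j ∉ I, (1 - p j)`. By independence and identical distribution,
`E[w I * w I']` factors over the members, each contributing `s_T`, `s_TF` or `s_F` according as
it lies in both, exactly one or neither of `I`, `I'`. For `#I = k`, the patterns `I'` with
`#(I ∩ I') = m` and `#(I' \ I) = h` number `C(k,m) C(ℓ-k,h)`, and `I'` is a majority pattern iff
`k_ℓ ≤ m + h`; the row `m = 0` is empty because `ℓ - k < k_ℓ`.
-/

namespace Finset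

variable {α : Type*}

lemma sum_filter_powerset_le_card_eq_sum_powersetCard {M : Type*} [AddCommMonoid M]
    (s : Finset α) (a : ℕ) (f : Finset α → M) :
    ∑ I ∈ s.powerset with a ≤ #I, f I = ∑ k ∈ Icc a #s, ∑ I ∈ powersetCard k s, f I := by
  rw [← sum_fiberwise_of_maps_to (t := Icc a #s) (g := card) fun I hI => ?_]
  · refine sum_congr rfl fun k hk => sum_congr ?_ fun _ _ => rfl
    rw [mem_Icc] at hk
    rw [powersetCard_eq_filter, filter_filter]
    exact filter_congr fun I _ => by omega
  · rw [mem_filter, mem_powerset] at hI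
    exact mem_Icc.mpr ⟨hI.2, card_le_card hI.1⟩

lemma sum_range_sum_range_ite_le_add {M : Type*} [AddCommMonoid M] {a n : ℕ} (hn : n < a)
    (k : ℕ) (f : ℕ → ℕ → M) :
    ∑ j ∈ range (k + 1), ∑ h ∈ range (n + 1), (if a ≤ j + h then f j h else 0) =
      ∑ j ∈ Icc 1 k, ∑ h ∈ Icc (a - j) n, f j h := by
  have hinner : ∀ j, ∑ h ∈ range (n + 1), (if a ≤ j + h then f j h else 0) =
      ∑ h ∈ Icc (a - j) n, f j h := fun j => by
    rw [← sum_filter]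
    exact sum_congr (by ext h; simp only [mem_filter, mem_range, mem_Icc]; omega) fun _ _ => rfl
  simp_rw [hinner]
  refine (sum_subset (fun j hj => by simp only [mem_Icc, mem_range] at hj ⊢; omega)
    fun j hj hj' => sum_eq_zero fun h hh => ?_).symm
  simp only [mem_Icc, mem_range] at hj hj' hh
  omega

variable [DecidableEq α]

lemma prod_ite_mem_eq_pow_mul_pow {M : Type*} [CommMonoid M] (I I' : Finset α) (a b : M) :
    ∏ i ∈ I, (if i ∈ I' then a else b) = a ^ #(I ∩ I') * b ^ (#I - #(I ∩ I')) := by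
  rw [prod_ite, prod_const, prod_const, filter_mem_eq_inter, filter_not, filter_mem_eq_inter,
    card_sdiff_of_subset inter_subset_left]

lemma sum_powerset_eq_sum_powerset_sum_powerset_sdiff {M : Type*} [AddCommMonoid M]
    {s I : Finset α} (hI : I ⊆ s) (f : Finset α → Finset α → M) :
    ∑ I' ∈ s.powerset, f (I ∩ I') ((s \ I) ∩ I') =
      ∑ J ∈ I.powerset, ∑ H ∈ (s \ I).powerset, f J H := by
  rw [← sum_product']
  refine sum_nbij' (fun I' => (I ∩ I', (s \ I) ∩ I')) (fun q => q.1 ∪ q.2) ?_ ?_ ?_ ?_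
    fun _ _ => rfl
  · intro I' _
    simp [inter_subset_left]
  · intro q hq
    simp only [mem_product, mem_powerset] at hq ⊢
    exact union_subset (hq.1.trans hI) (hq.2.trans sdiff_subset)
  · intro I' hI'
    simp only [mem_powerset] at hI'
    ext x; grind
  · intro q hq
    simp only [mem_product, mem_powerset] at hq
    ext x <;> grind

lemma sum_powerset_apply_card_inter_card_sdiff_inter {M : Type*} [AddCommMonoid M]
    {s I : Finset α} (hI : I ⊆ s) (f : ℕ → ℕ → M) :
    ∑ I' ∈ s.powerset, f #(I ∩ I') #((s \ I) ∩ I') =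
      ∑ j ∈ range (#I + 1), ∑ h ∈ range (#s - #I + 1),
        (#I).choose j • (#s - #I).choose h • f j h := by
  rw [sum_powerset_eq_sum_powerset_sum_powerset_sdiff hI (fun J H => f #J #H),
    ← card_sdiff_of_subset hI]
  simp only [sum_powerset_apply_card, ← smul_sum]
  exact sum_powerset_apply_card (fun j => ∑ h ∈ range (#(s \ I) + 1), (#(s \ I)).choose h • f j h)

lemma sum_filter_powerset_pow_mul_pow {R : Type*} [CommSemiring R] {s I : Finset α} (hI : I ⊆ s)
    {a : ℕ} (ha : #s - #I < a) (x y z : R) :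
    ∑ I' ∈ s.powerset with a ≤ #I', x ^ #(I ∩ I') * y ^ (#I - #(I ∩ I')) *
        (y ^ #((s \ I) ∩ I') * z ^ (#(s \ I) - #((s \ I) ∩ I'))) =
      ∑ j ∈ Icc 1 #I, ∑ h ∈ Icc (a - j) (#s - #I),
        ((#I).choose j : R) * ((#s - #I).choose h : R) * x ^ j * y ^ (#I - j + h) *
          z ^ (#s - #I - h) := by
  have hcard : ∀ I' ∈ s.powerset, #I' = #(I ∩ I') + #((s \ I) ∩ I') := fun I' hI' => by
    rw [mem_powerset] at hI'
    rw [← card_inter_add_card_sdiff I' I, inter_comm]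
    congr 2
    ext i; grind
  set f : ℕ → ℕ → R := fun j h =>
    if a ≤ j + h then x ^ j * y ^ (#I - j) * (y ^ h * z ^ (#s - #I - h)) else 0 with hf
  calc _ = ∑ I' ∈ s.powerset, f #(I ∩ I') #((s \ I) ∩ I') := by
        rw [sum_filter]
        refine sum_congr rfl fun I' hI' => ?_
        rw [hf, hcard I' hI', card_sdiff_of_subset hI]
    _ = _ := by
        rw [sum_powerset_apply_card_inter_card_sdiff_inter hI, hf]
        simp_rw [smul_ite, smul_zero]
        rw [sum_range_sum_range_ite_le_add ha]
        refine sum_congr rfl fun j _ => sum_congr rfl fun h _ => ?_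
        rw [nsmul_eq_mul, nsmul_eq_mul, pow_add]
        ring

end Finset

section Moments

variable {Ω : Type*} [MeasurableSpace Ω] {μ : Measure Ω} [IsProbabilityMeasure μ] {X : Ω → ℝ}

lemma integral_sq_eq_variance_add_sq (hX : MemLp X 2 μ) :
    ∫ ω, X ω ^ 2 ∂μ = variance X μ + (∫ ω, X ω ∂μ) ^ 2 := by
  rw [variance_eq_sub hX]
  simp

lemma integral_one_sub_sq_eq_variance_add_sq (hX : MemLp X 2 μ) :
    ∫ ω, (1 - X ω) ^ 2 ∂μ = variance X μ + (1 - ∫ ω, X ω ∂μ) ^ 2 := by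
  rw [integral_sq_eq_variance_add_sq (X := fun ω => 1 - X ω) ((memLp_const 1).sub hX),
    variance_const_sub hX.aestronglyMeasurable,
    integral_sub (integrable_const 1) (hX.integrable one_le_two), integral_const]
  simp

lemma integral_mul_one_sub_eq_sub_variance (hX : MemLp X 2 μ) :
    ∫ ω, X ω * (1 - X ω) ∂μ = (∫ ω, X ω ∂μ) * (1 - ∫ ω, X ω ∂μ) - variance X μ := by
  simp_rw [mul_one_sub, ← sq]
  rw [integral_sub (hX.integrable one_le_two) hX.integrable_sq, integral_sq_eq_variance_add_sq hX]
  ring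

end Moments

section Independence

variable {ι Ω : Type*} [MeasurableSpace Ω] {μ : Measure Ω} {p : ι → Ω → ℝ}

lemma ProbabilityTheory.iIndepFun.integral_finset_prod_comp (hp : iIndepFun p μ)
    (hmeas : ∀ i, AEMeasurable (p i) μ)
    {g : ι → ℝ → ℝ} (hg : ∀ i, Measurable (g i)) (s : Finset ι) :
    ∫ ω, ∏ i ∈ s, g i (p i ω) ∂μ = ∏ i ∈ s, ∫ ω, g i (p i ω) ∂μ := by
  simp_rw [← Finset.prod_coe_sort s]
  exact (hp.precomp Subtype.val_injective).integral_fun_prod_comp (fun i => hmeas i)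
    (fun i => (hg i).aestronglyMeasurable)

end Independence

section VotePattern

variable {ι : Type*} [DecidableEq ι]

noncomputable def votePatternProb (s I : Finset ι) (x : ι → ℝ) : ℝ :=
  (∏ i ∈ I, x i) * ∏ j ∈ s \ I, (1 - x j)

lemma votePatternProb_eq_prod_ite {s I : Finset ι} (hI : I ⊆ s) (x : ι → ℝ) :
    votePatternProb s I x = ∏ i ∈ s, if i ∈ I then x i else 1 - x i := by
  rw [votePatternProb, prod_ite, filter_mem_eq_inter, inter_eq_right.mpr hI, ← sdiff_eq_filter]

lemma votePatternProb_mem_unitInterval (s I : Finset ι) {x : ι → ℝ}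
    (hx : ∀ i, x i ∈ unitInterval) :
    votePatternProb s I x ∈ unitInterval :=
  unitInterval.mul_mem (unitInterval.prod_mem fun i _ => hx i)
    (unitInterval.prod_mem fun i _ => Set.Icc.mem_iff_one_sub_mem.mp (hx i))

lemma sum_powerset_votePatternProb (s : Finset ι) (x : ι → ℝ) :
    ∑ I ∈ s.powerset, votePatternProb s I x = 1 := by
  simp only [votePatternProb, ← prod_add, add_sub_cancel, prod_const_one]

lemma majAcc_eq_sum_filter_powerset (s : Finset ι) (x : ι → ℝ) :
    majAcc s x = ∑ I ∈ s.powerset with #s / 2 + 1 ≤ #I, votePatternProb s I x := by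
  rw [sum_filter_powerset_le_card_eq_sum_powersetCard]
  rfl

lemma majAcc_mem_unitInterval (s : Finset ι) {x : ι → ℝ} (hx : ∀ i, x i ∈ unitInterval) :
    majAcc s x ∈ unitInterval := by
  rw [majAcc_eq_sum_filter_powerset]
  refine ⟨sum_nonneg fun I _ => (votePatternProb_mem_unitInterval s I hx).1, ?_⟩
  calc _ ≤ ∑ I ∈ s.powerset, votePatternProb s I x :=
        sum_le_sum_of_subset_of_nonneg (filter_subset _ _)
          fun I _ _ => (votePatternProb_mem_unitInterval s I hx).1
    _ = 1 := sum_powerset_votePatternProb s x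

variable {Ω : Type*} [MeasurableSpace Ω] {μ : Measure Ω} {p : ι → Ω → ℝ} {X : Ω → ℝ}

lemma integral_votePatternProb_mul_votePatternProb (hp : iIndepFun p μ)
    (hmeas : ∀ i, Measurable (p i)) (hident : ∀ i, IdentDistrib (p i) X μ μ)
    {s I I' : Finset ι} (hI : I ⊆ s) (hI' : I' ⊆ s) :
    ∫ ω, votePatternProb s I (p · ω) * votePatternProb s I' (p · ω) ∂μ =
      (∫ ω, X ω ^ 2 ∂μ) ^ #(I ∩ I') * (∫ ω, X ω * (1 - X ω) ∂μ) ^ (#I - #(I ∩ I')) *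
        ((∫ ω, X ω * (1 - X ω) ∂μ) ^ #((s \ I) ∩ I') *
          (∫ ω, (1 - X ω) ^ 2 ∂μ) ^ (#(s \ I) - #((s \ I) ∩ I'))) := by
  set g : ι → ℝ → ℝ := fun i x => (if i ∈ I then x else 1 - x) * (if i ∈ I' then x else 1 - x)
  have hg : ∀ i, Measurable (g i) := fun i => by
    simp only [g]; split_ifs <;> fun_prop
  have hfactor : ∀ i, ∫ ω, g i (p i ω) ∂μ =
      if i ∈ I then (if i ∈ I' then ∫ ω, X ω ^ 2 ∂μ else ∫ ω, X ω * (1 - X ω) ∂μ)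
      else (if i ∈ I' then ∫ ω, X ω * (1 - X ω) ∂μ else ∫ ω, (1 - X ω) ^ 2 ∂μ) := fun i => by
    rw [show ∫ ω, g i (p i ω) ∂μ = ∫ ω, g i (X ω) ∂μ from ((hident i).comp (hg i)).integral_eq]
    simp only [g]
    split_ifs <;> simp only [sq, mul_comm]
  simp_rw [votePatternProb_eq_prod_ite hI, votePatternProb_eq_prod_ite hI', ← prod_mul_distrib]
  rw [hp.integral_finset_prod_comp (fun i => (hmeas i).aemeasurable) hg, prod_congr rfl
    (fun i _ => hfactor i), prod_ite, filter_mem_eq_inter, inter_eq_right.mpr hI,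
    ← sdiff_eq_filter, prod_ite_mem_eq_pow_mul_pow, prod_ite_mem_eq_pow_mul_pow]

end VotePattern

section SecondMoment

variable {ι Ω : Type*} [DecidableEq ι] [MeasurableSpace Ω] {μ : Measure Ω} [IsProbabilityMeasure μ]
  {p : ι → Ω → ℝ}

lemma memLp_of_forall_mem_unitInterval {f : Ω → ℝ} (hf : Measurable f)
    (h : ∀ ω, f ω ∈ unitInterval) (q : ENNReal) : MemLp f q μ :=
  MemLp.of_bound hf.aestronglyMeasurable 1 <| ae_of_all _ fun ω => by
    rw [Real.norm_eq_abs, abs_le]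
    exact ⟨by linarith [(h ω).1], (h ω).2⟩

lemma measurable_votePatternProb (hmeas : ∀ i, Measurable (p i)) (s I : Finset ι) :
    Measurable fun ω => votePatternProb s I (p · ω) := by
  unfold votePatternProb
  fun_prop

lemma integral_majAcc_sq_eq_sum_sum (hmeas : ∀ i, Measurable (p i))
    (hbdd : ∀ i ω, p i ω ∈ unitInterval) (s : Finset ι) :
    ∫ ω, majAcc s (p · ω) ^ 2 ∂μ =
      ∑ I ∈ s.powerset with #s / 2 + 1 ≤ #I, ∑ I' ∈ s.powerset with #s / 2 + 1 ≤ #I',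
        ∫ ω, votePatternProb s I (p · ω) * votePatternProb s I' (p · ω) ∂μ := by
  have hint : ∀ I I', Integrable
      (fun ω => votePatternProb s I (p · ω) * votePatternProb s I' (p · ω)) μ :=
    fun I I' => (memLp_of_forall_mem_unitInterval
      ((measurable_votePatternProb hmeas s I).mul (measurable_votePatternProb hmeas s I'))
      (fun ω => unitInterval.mul_mem (votePatternProb_mem_unitInterval s I (hbdd · ω))
        (votePatternProb_mem_unitInterval s I' (hbdd · ω))) 1).integrable le_rfl
  simp_rw [majAcc_eq_sum_filter_powerset, sq, sum_mul_sum]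
  rw [integral_finsetSum _ fun I _ => integrable_finsetSum _ fun I' _ => hint I I']
  exact sum_congr rfl fun I _ => integral_finsetSum _ fun I' _ => hint I I'

theorem integral_majAcc_sq {X : Ω → ℝ} (hp : iIndepFun p μ) (hmeas : ∀ i, Measurable (p i))
    (hident : ∀ i, IdentDistrib (p i) X μ μ) (hbdd : ∀ i ω, p i ω ∈ unitInterval) (s : Finset ι) :
    ∫ ω, majAcc s (p · ω) ^ 2 ∂μ =
      ∑ k ∈ Icc (#s / 2 + 1) #s, ∑ j ∈ Icc 1 k, ∑ h ∈ Icc (#s / 2 + 1 - j) (#s - k),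
        ((#s).choose k : ℝ) * (k.choose j : ℝ) * ((#s - k).choose h : ℝ) *
          (∫ ω, X ω ^ 2 ∂μ) ^ j * (∫ ω, X ω * (1 - X ω) ∂μ) ^ (k - j + h) *
          (∫ ω, (1 - X ω) ^ 2 ∂μ) ^ (#s - k - h) := by
  rw [integral_majAcc_sq_eq_sum_sum hmeas hbdd, sum_filter_powerset_le_card_eq_sum_powersetCard]
  refine sum_congr rfl fun k hk => ?_
  have hrow : ∀ I ∈ powersetCard k s, ∑ I' ∈ s.powerset with #s / 2 + 1 ≤ #I',
      ∫ ω, votePatternProb s I (p · ω) * votePatternProb s I' (p · ω) ∂μ =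
        ∑ j ∈ Icc 1 k, ∑ h ∈ Icc (#s / 2 + 1 - j) (#s - k),
          (k.choose j : ℝ) * ((#s - k).choose h : ℝ) *
          (∫ ω, X ω ^ 2 ∂μ) ^ j * (∫ ω, X ω * (1 - X ω) ∂μ) ^ (k - j + h) *
          (∫ ω, (1 - X ω) ^ 2 ∂μ) ^ (#s - k - h) := fun I hI => by
    rw [mem_powersetCard] at hI
    rw [mem_Icc] at hk
    rw [sum_congr rfl fun I' hI' => integral_votePatternProb_mul_votePatternProb hp hmeas hident
      hI.1 (mem_powerset.mp (mem_filter.mp hI').1), sum_filter_powerset_pow_mul_pow hI.1 (by omega),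
      hI.2]
  rw [sum_congr rfl hrow, sum_const, card_powersetCard, nsmul_eq_mul, mul_sum]
  refine sum_congr rfl fun j _ => ?_
  rw [mul_sum]
  refine sum_congr rfl fun h _ => ?_
  ring

end SecondMoment

/-- Covariance expansion for the majority accuracy of i.i.d. members: with
`s_T = σ²+μ²`, `s_F = σ²+(1−μ)²`, `s_TF = μ(1−μ)−σ²` and `k_ℓ = ⌊ℓ/2⌋+1`,
`E[q_ℓ²] = Σ_{k=k_ℓ}^{ℓ} Σ_{m=1}^{k} Σ_{h=k_ℓ−m}^{ℓ−k} 𝟙[k_ℓ−m ≤ ℓ−k]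
C(ℓ,k) C(k,m) C(ℓ−k,h) s_T^m s_TF^{k−m+h} s_F^{ℓ−k−h}`,
so `Var(q_ℓ)` equals this sum minus `(E[q_ℓ])²`. -/
theorem second_moment_majAcc_iid {Ω : Type*} [MeasurableSpace Ω] (μ : Measure Ω)
    [IsProbabilityMeasure μ] (p : ℕ → Ω → ℝ) (hmeas : ∀ i, Measurable (p i))
    (hindep : iIndepFun p μ)
    (hident : ∀ i, IdentDistrib (p i) (p 0) μ μ)
    (hbdd : ∀ i, ∀ ω, p i ω ∈ Set.Icc (0 : ℝ) 1)
    (m σ2 sT sF sTF : ℝ)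
    (hm : m = ∫ ω, p 0 ω ∂μ) (hσ : σ2 = variance (p 0) μ)
    (hT : sT = σ2 + m ^ 2) (hF : sF = σ2 + (1 - m) ^ 2)
    (hTF : sTF = m * (1 - m) - σ2) (ℓ : ℕ) :
    (∫ ω, (majAcc (Finset.range ℓ) (fun i => p i ω)) ^ 2 ∂μ)
      = ∑ k ∈ Finset.Icc (ℓ / 2 + 1) ℓ, ∑ j ∈ Finset.Icc 1 k,
          ∑ h ∈ Finset.Icc (ℓ / 2 + 1 - j) (ℓ - k),
            (if ℓ / 2 + 1 - j ≤ ℓ - k then (1 : ℝ) else 0) *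
              (ℓ.choose k : ℝ) * (k.choose j : ℝ) * ((ℓ - k).choose h : ℝ) *
              sT ^ j * sTF ^ (k - j + h) * sF ^ (ℓ - k - h) ∧
    variance (fun ω => majAcc (Finset.range ℓ) (fun i => p i ω)) μ
      = (∫ ω, (majAcc (Finset.range ℓ) (fun i => p i ω)) ^ 2 ∂μ)
        - (∫ ω, majAcc (Finset.range ℓ) (fun i => p i ω) ∂μ) ^ 2 := by
  have hX : MemLp (p 0) 2 μ := memLp_of_forall_mem_unitInterval (hmeas 0) (hbdd 0) 2
  have hq : MemLp (fun ω => majAcc (range ℓ) (p · ω)) 2 μ :=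
    memLp_of_forall_mem_unitInterval (by unfold majAcc; fun_prop)
      (fun ω => majAcc_mem_unitInterval _ (hbdd · ω)) 2
  refine ⟨?_, by simpa using variance_eq_sub hq⟩
  rw [integral_majAcc_sq hindep hmeas hident hbdd, card_range, integral_sq_eq_variance_add_sq hX,
    integral_mul_one_sub_eq_sub_variance hX, integral_one_sub_sq_eq_variance_add_sq hX, ← hm, ← hσ,
    ← hT, ← hTF, ← hF]
  refine sum_congr rfl fun k _ => sum_congr rfl fun j _ => sum_congr rfl fun h hh => ?_
  rw [mem_Icc] at hh
  rw [if_pos (hh.1.trans hh.2), one_mul]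
end
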